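/- Let A, B, C be three non-collinear points in the Euclidean plane ℝ², let I be the incenter of triangle ABC, and set u = dist(A,I), v = dist(B,I), w = dist(C,I). Then the triangle ABC is acute (all three angles < π/2) if and only if √2·u²vw + u²(v² + w²) − v²w² > 0, √2·uv²w + v²(u² + w²) − u²w² > 0, and √2·uvw² + w²(u² + v²) − u²v² > 0. -/

import Mathlib

/-! With `a, b, c` the side lengths, the incenter satisfies `AI² (a + b + c) = b c (b + c - a)`
and cyclically. Substituting, `(a + b + c)²` times the criterion at `A` becomes a positive
multiple of `m - k`, where `m = √(b c)` and `k = √((c + a - b)(a + b - c) / 2)`. Since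
`m² - k² = (b² + c² - a²) / 2`, the criterion at `A` holds exactly when `a² < b² + c²`, that is,
when the angle at `A` is acute. -/

open Real EuclideanGeometry

/-- The incenter of the triangle with vertices `A`, `B`, `C`, given by its standard
barycentric formula with weights the opposite side lengths. -/
noncomputable def triangleIncenter (A B C : EuclideanSpace ℝ (Fin 2)) :
    EuclideanSpace ℝ (Fin 2) :=
  (dist B C / (dist B C + dist C A + dist A B)) • A +
    (dist C A / (dist B C + dist C A + dist A B)) • B +
    (dist A B / (dist B C + dist C A + dist A B)) • C

open RealInnerProductSpace

section

variable {V P : Type*}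

theorem collinear_rotate {k : Type*} [DivisionRing k] [AddCommGroup V] [Module k V]
    [AddTorsor V P] {A B C : P} : Collinear k {B, C, A} ↔ Collinear k {A, B, C} := by
  rw [Set.pair_comm, Set.insert_comm]

theorem dist_lt_dist_add_dist_of_not_collinear [NormedAddCommGroup V] [NormedSpace ℝ V]
    [StrictConvexSpace ℝ V] [MetricSpace P] [NormedAddTorsor V P] {A B C : P}
    (h : ¬ Collinear ℝ {A, B, C}) : dist B C < dist C A + dist A B := by
  have hBAC : ¬ Wbtw ℝ B A C := fun hw => h (by simpa [Set.insert_comm] using hw.collinear)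
  linarith [dist_lt_dist_add_dist_iff.2 hBAC, dist_comm A B, dist_comm A C]

theorem angle_lt_pi_div_two_iff_dist_sq [NormedAddCommGroup V] [InnerProductSpace ℝ V]
    [MetricSpace P] [NormedAddTorsor V P] (X Y Z : P) :
    ∠ Y X Z < π / 2 ↔ dist Y Z ^ 2 < dist Y X ^ 2 + dist Z X ^ 2 := by
  rcases eq_or_ne Y X with rfl | hYX
  · simp [dist_comm Z Y]
  rcases eq_or_ne Z X with rfl | hZX
  · simp
  have hYX' : 0 < dist Y X := dist_pos.2 hYX
  have hZX' : 0 < dist Z X := dist_pos.2 hZX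
  have hlaw := law_cos Y X Z
  have h0 := angle_nonneg Y X Z
  have hπ := angle_le_pi Y X Z
  constructor
  · intro hlt
    have hcos : 0 < Real.cos (∠ Y X Z) := cos_pos_of_mem_Ioo ⟨by linarith [pi_pos], hlt⟩
    nlinarith [mul_pos (mul_pos hYX' hZX') hcos]
  · intro hlt
    by_contra! hge
    have hcos : Real.cos (∠ Y X Z) ≤ 0 := cos_nonpos_of_pi_div_two_le_of_le hge (by linarith)
    nlinarith [mul_nonneg (mul_nonneg hYX'.le hZX'.le) (neg_nonneg.2 hcos)]

end

theorem triangleIncenter_rotate (A B C : EuclideanSpace ℝ (Fin 2)) :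
    triangleIncenter B C A = triangleIncenter A B C := by
  simp only [triangleIncenter]
  rw [show dist C A + dist A B + dist B C = dist B C + dist C A + dist A B by ring]
  module

theorem dist_triangleIncenter_sq_mul (A B C : EuclideanSpace ℝ (Fin 2)) :
    dist A (triangleIncenter A B C) ^ 2 * (dist B C + dist C A + dist A B) =
      dist C A * dist A B * (dist C A + dist A B - dist B C) := by
  set a := dist B C with ha
  set b := dist C A with hb
  set c := dist A B with hc
  have ha0 : 0 ≤ a := dist_nonneg
  have hb0 : 0 ≤ b := dist_nonneg
  have hc0 : 0 ≤ c := dist_nonneg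
  rcases (add_nonneg (add_nonneg ha0 hb0) hc0).eq_or_lt with hσ | hσ
  · rw [← hσ, show b = 0 by linarith]
    ring
  have hvec : (a + b + c) • (A - triangleIncenter A B C) = b • (A - B) + c • (A - C) := by
    simp only [triangleIncenter, ← ha, ← hb, ← hc, smul_add, smul_sub, smul_smul,
      mul_div_cancel₀ _ hσ.ne']
    module
  have hinner : 2 * ⟪A - B, A - C⟫ = c ^ 2 + b ^ 2 - a ^ 2 := by
    have := norm_sub_sq_real (A - B) (A - C)
    rw [sub_sub_sub_cancel_left, ← dist_eq_norm, ← dist_eq_norm, ← dist_eq_norm,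
      dist_comm C B, dist_comm A C] at this
    linarith
  have hnorm : ((a + b + c) * dist A (triangleIncenter A B C)) ^ 2 =
      ‖b • (A - B) + c • (A - C)‖ ^ 2 := by
    rw [dist_eq_norm, ← hvec, norm_smul, Real.norm_of_nonneg hσ.le]
  rw [norm_add_sq_real, norm_smul, norm_smul, real_inner_smul_left, real_inner_smul_right,
    ← dist_eq_norm, ← dist_eq_norm, dist_comm A C, Real.norm_of_nonneg hb0,
    Real.norm_of_nonneg hc0] at hnorm
  refine mul_left_cancel₀ hσ.ne' ?_
  linear_combination hnorm + b * c * hinner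

theorem sq_lt_sq_add_sq_iff_of_incenter_dist {a b c u v w : ℝ}
    (ha : a < b + c) (hb : b < c + a) (hc : c < a + b) (hv0 : 0 ≤ v) (hw0 : 0 ≤ w)
    (hu : u ^ 2 * (a + b + c) = b * c * (b + c - a))
    (hv : v ^ 2 * (b + c + a) = c * a * (c + a - b))
    (hw : w ^ 2 * (c + a + b) = a * b * (a + b - c)) :
    a ^ 2 < b ^ 2 + c ^ 2 ↔
      0 < √2 * u ^ 2 * v * w + u ^ 2 * (v ^ 2 + w ^ 2) - v ^ 2 * w ^ 2 := by
  have ha0 : 0 < a := by linarith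
  have hb0 : 0 < b := by linarith
  have hc0 : 0 < c := by linarith
  set m := √(b * c)
  set k := √((c + a - b) * (a + b - c) / 2)
  have hm0 : 0 < m := sqrt_pos.2 (by positivity)
  have hk0 : 0 ≤ k := sqrt_nonneg _
  have hm2 : m ^ 2 = b * c := sq_sqrt (by positivity)
  have hk2 : k ^ 2 = (c + a - b) * (a + b - c) / 2 :=
    sq_sqrt (div_nonneg (mul_nonneg (by linarith) (by linarith)) zero_le_two)
  have hvw : √2 * (v * w * (a + b + c)) = 2 * a * m * k := by
    rw [← sq_eq_sq₀ (by positivity) (by positivity)]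
    linear_combination (v ^ 2 * w ^ 2 * (a + b + c) ^ 2) * sq_sqrt zero_le_two
      + 2 * (w ^ 2 * (c + a + b)) * hv + 2 * (c * a * (c + a - b)) * hw
      - 4 * a ^ 2 * k ^ 2 * hm2 - 4 * a ^ 2 * b * c * hk2
  have hfactor :
      (√2 * u ^ 2 * v * w + u ^ 2 * (v ^ 2 + w ^ 2) - v ^ 2 * w ^ 2) * (a + b + c) ^ 2 =
        2 * a * b * c * ((b + c - a) * k + 2 * a * (m + k)) * (m - k) := by
    linear_combination
      (√2 * (v * w * (a + b + c)) + v ^ 2 * (b + c + a) + w ^ 2 * (c + a + b)) * hu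
      + b * c * (b + c - a) * hvw
      + (b * c * (b + c - a) - w ^ 2 * (c + a + b)) * hv
      + (b * c * (b + c - a) - c * a * (c + a - b)) * hw
      - 4 * a ^ 2 * b * c * hm2 + 2 * a * b * c * (a + b + c) * hk2
  have hpos : 0 < 2 * a * b * c * ((b + c - a) * k + 2 * a * (m + k)) := by
    have : 0 < b + c - a := by linarith
    positivity
  calc a ^ 2 < b ^ 2 + c ^ 2 ↔ k ^ 2 < m ^ 2 := by
        rw [hk2, hm2]
        constructor <;> intro h <;> linarith
    _ ↔ k < m := sq_lt_sq₀ hk0 hm0.le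
    _ ↔ 0 < 2 * a * b * c * ((b + c - a) * k + 2 * a * (m + k)) * (m - k) := by
        rw [mul_pos_iff_of_pos_left hpos, sub_pos]
    _ ↔ _ := by
        rw [← hfactor, mul_pos_iff_of_pos_right (by positivity)]

theorem angle_lt_pi_div_two_iff_of_dist_triangleIncenter {A B C : EuclideanSpace ℝ (Fin 2)}
    (h : ¬ Collinear ℝ {A, B, C}) {u v w : ℝ} (hu : dist A (triangleIncenter A B C) = u)
    (hv : dist B (triangleIncenter A B C) = v) (hw : dist C (triangleIncenter A B C) = w) :
    ∠ B A C < π / 2 ↔ 0 < √2 * u ^ 2 * v * w + u ^ 2 * (v ^ 2 + w ^ 2) - v ^ 2 * w ^ 2 := by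
  have hBCA : ¬ Collinear ℝ {B, C, A} := by rwa [collinear_rotate]
  have hCAB : ¬ Collinear ℝ {C, A, B} := by rwa [collinear_rotate, collinear_rotate]
  have hu2 := dist_triangleIncenter_sq_mul A B C
  have hv2 := dist_triangleIncenter_sq_mul B C A
  have hw2 := dist_triangleIncenter_sq_mul C A B
  rw [hu] at hu2
  rw [triangleIncenter_rotate, hv] at hv2
  rw [← triangleIncenter_rotate, hw] at hw2
  rw [angle_lt_pi_div_two_iff_dist_sq, dist_comm B A, add_comm (dist A B ^ 2)]
  exact sq_lt_sq_add_sq_iff_of_incenter_dist (dist_lt_dist_add_dist_of_not_collinear h)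
    (dist_lt_dist_add_dist_of_not_collinear hBCA) (dist_lt_dist_add_dist_of_not_collinear hCAB)
    (hv ▸ dist_nonneg) (hw ▸ dist_nonneg) hu2 hv2 hw2

theorem acute_iff_incenter_distances (A B C : EuclideanSpace ℝ (Fin 2))
    (h : ¬ Collinear ℝ ({A, B, C} : Set (EuclideanSpace ℝ (Fin 2))))
    (u v w : ℝ)
    (hu : u = dist A (triangleIncenter A B C))
    (hv : v = dist B (triangleIncenter A B C))
    (hw : w = dist C (triangleIncenter A B C)) :
    (∠ B A C < π / 2 ∧ ∠ A B C < π / 2 ∧ ∠ A C B < π / 2) ↔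
    (Real.sqrt 2 * u ^ 2 * v * w + u ^ 2 * (v ^ 2 + w ^ 2) - v ^ 2 * w ^ 2 > 0 ∧
     Real.sqrt 2 * u * v ^ 2 * w + v ^ 2 * (u ^ 2 + w ^ 2) - u ^ 2 * w ^ 2 > 0 ∧
     Real.sqrt 2 * u * v * w ^ 2 + w ^ 2 * (u ^ 2 + v ^ 2) - u ^ 2 * v ^ 2 > 0) := by
  have hBCA : ¬ Collinear ℝ {B, C, A} := by rwa [collinear_rotate]
  have hCAB : ¬ Collinear ℝ {C, A, B} := by rwa [collinear_rotate, collinear_rotate]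
  have hI₁ := triangleIncenter_rotate A B C
  have hI₂ := (triangleIncenter_rotate C A B).symm
  rw [angle_comm A B C,
    angle_lt_pi_div_two_iff_of_dist_triangleIncenter h hu.symm hv.symm hw.symm,
    angle_lt_pi_div_two_iff_of_dist_triangleIncenter hBCA (hI₁ ▸ hv.symm) (hI₁ ▸ hw.symm)
      (hI₁ ▸ hu.symm),
    angle_lt_pi_div_two_iff_of_dist_triangleIncenter hCAB (hI₂ ▸ hw.symm) (hI₂ ▸ hu.symm)
      (hI₂ ▸ hv.symm)]
  ring_nf
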